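/- Let f : ℝ^d → ℝ be C² with L-Lipschitz continuous gradient and let x* be a strict saddle point of f. Let α ∈ (0, 1/L) and let g_α be the proximal point map g_α(x) = argmin_z [f(z) + ‖z−x‖²/(2α)]. Denote the eigenvalues of ∇²f(x*) by h₁ ≥ … ≥ h_d with h_{s+1} < 0 the largest negative one. Then g_α(x*) = x*, Dg_α(x*) = (I + α∇²f(x*))⁻¹, its eigenvalues are 1/(1 + α h_i), those with h_i ≥ 0 lie in (1/2, 1], and those with h_i < 0 are strictly greater than 1; in particular the unstable expansion factor satisfies 1/(1 + α h_{s+1}) − 1 = −α h_{s+1}/(1 + α h_{s+1}) > −α h_{s+1} > 0. -/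

import Mathlib

/-!
The first-order condition of the proximal problem says that `g` is a right inverse of
`Φ z = z + α ∇f z`. Since `∇f` is `L`-Lipschitz and `α L < 1`, `Φ` is antilipschitz; hence `g`
is Lipschitz, and `g` fixes every critical point because `Φ` does and `Φ` is injective.
The inverse function theorem for one-sided inverses then gives
`Dg(x*) = DΦ(x*)⁻¹ = (I + α ∇²f(x*))⁻¹`, which exists by a Neumann series because
`‖α ∇²f(x*)‖ ≤ α L < 1`. The same bound puts every `α hᵢ` in `(-1, 1)`, and the eigenvalue
estimates are then elementary.
-/

open InnerProductSpace NNReal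

theorem antilipschitzWith_add_smul {E : Type*} [NormedAddCommGroup E] [NormedSpace ℝ E]
    {F : E → E} {K : ℝ≥0} (hF : LipschitzWith K F) {α : ℝ} (hαK : |α| * K < 1) :
    AntilipschitzWith (1 - ‖α‖₊ * K)⁻¹ fun z => z + α • F z := by
  have hK : ‖α‖₊ * K < 1⁻¹ := by
    rw [inv_one, ← NNReal.coe_lt_coe]
    simpa using hαK
  simpa using AntilipschitzWith.id.add_lipschitzWith ((lipschitzWith_smul α).comp hF) hK

theorem exists_continuousLinearEquiv_coe_eq_id_add {𝕜 F : Type*} [NontriviallyNormedField 𝕜]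
    [NormedAddCommGroup F] [NormedSpace 𝕜 F] [CompleteSpace F] {t : F →L[𝕜] F} (ht : ‖t‖ < 1) :
    ∃ T : F ≃L[𝕜] F, (T : F →L[𝕜] F) = ContinuousLinearMap.id 𝕜 F + t :=
  ⟨ContinuousLinearEquiv.unitsEquiv 𝕜 F (Units.oneSub (-t) (by rwa [norm_neg])), by ext; simp⟩

theorem norm_le_opNorm_of_apply_eq_smul {𝕜 F : Type*} [NontriviallyNormedField 𝕜]
    [NormedAddCommGroup F] [NormedSpace 𝕜 F] {B : F →L[𝕜] F} {μ : 𝕜} {v : F}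
    (hv : B v = μ • v) (hv0 : v ≠ 0) : ‖μ‖ ≤ ‖B‖ := by
  have hle := B.le_opNorm v
  rw [hv, norm_smul] at hle
  exact le_of_mul_le_mul_right hle (norm_pos_iff.2 hv0)

theorem ContinuousLinearEquiv.symm_apply_eq_inv_smul {𝕜 F : Type*} [Field 𝕜]
    [TopologicalSpace 𝕜] [AddCommGroup F] [Module 𝕜 F] [TopologicalSpace F] {T : F ≃L[𝕜] F}
    {c : 𝕜} {v : F} (hv : T v = c • v) (hc : c ≠ 0) : T.symm v = c⁻¹ • v := by
  rw [T.symm_apply_eq, map_smul, hv, inv_smul_smul₀ hc]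

section InnerProductSpace

variable {E : Type*} [NormedAddCommGroup E] [InnerProductSpace ℝ E] [CompleteSpace E]

theorem ContDiff.gradient {f : E → ℝ} {n : WithTop ℕ∞} (hf : ContDiff ℝ (n + 1) f) :
    ContDiff ℝ n (gradient f) :=
  (toDual ℝ E).symm.contDiff.comp (hf.fderiv_right le_rfl)

def IsProxMap (f : E → ℝ) (α : ℝ) (g : E → E) : Prop :=
  ∀ x z, z ≠ g x → f (g x) + ‖g x - x‖ ^ 2 / (2 * α) < f z + ‖z - x‖ ^ 2 / (2 * α)

namespace IsProxMap

variable {f : E → ℝ} {α : ℝ} {g : E → E} {K : ℝ≥0}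

theorem leftInverse (hg : IsProxMap f α g) (hα : α ≠ 0) (hf : Differentiable ℝ f) :
    Function.LeftInverse (fun z => z + α • gradient f z) g := by
  intro x
  set p := g x
  have hmin : IsLocalMin (fun z => f z + ‖z - x‖ ^ 2 / (2 * α)) p :=
    .of_forall fun z => by
      rcases eq_or_ne z p with rfl | hz
      exacts [le_rfl, (hg x z hz).le]
  have hsq : HasFDerivAt (fun z => ‖z - x‖ ^ 2 / (2 * α))
      ((2 * α)⁻¹ • (2 • innerSL ℝ (p - x))) p := by
    simpa [div_eq_mul_inv, mul_comm] using
      (((hasFDerivAt_id p).sub_const x).norm_sq).mul_const (2 * α)⁻¹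
  have hderiv : HasFDerivAt (fun z => f z + ‖z - x‖ ^ 2 / (2 * α))
      (toDual ℝ E (gradient f p + α⁻¹ • (p - x))) p := by
    refine ((hf p).hasGradientAt.hasFDerivAt.add hsq).congr_fderiv ?_
    ext w
    simp [real_inner_comm]
    field_simp
  have hzero : gradient f p + α⁻¹ • (p - x) = 0 :=
    (toDual ℝ E).map_eq_zero_iff.1 (hmin.hasFDerivAt_eq_zero hderiv)
  have hscaled := congrArg (α • ·) hzero
  simp only [smul_add, smul_smul, mul_inv_cancel₀ hα, one_smul, smul_zero] at hscaled
  linear_combination (norm := module) hscaled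

theorem lipschitzWith (hg : IsProxMap f α g) (hα : α ≠ 0) (hf : Differentiable ℝ f)
    (hK : LipschitzWith K (gradient f)) (hαK : |α| * K < 1) :
    LipschitzWith (1 - ‖α‖₊ * K)⁻¹ g :=
  (antilipschitzWith_add_smul hK hαK).to_rightInverse (hg.leftInverse hα hf)

theorem apply_eq_self_of_gradient_eq_zero (hg : IsProxMap f α g) (hα : α ≠ 0)
    (hf : Differentiable ℝ f) (hK : LipschitzWith K (gradient f)) (hαK : |α| * K < 1) {x : E}
    (hx : gradient f x = 0) : g x = x :=
  (antilipschitzWith_add_smul hK hαK).injective <| by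
    simp only [hg.leftInverse hα hf x, hx, smul_zero, add_zero]

theorem hasFDerivAt (hg : IsProxMap f α g) (hα : α ≠ 0) (hf : Differentiable ℝ f)
    (hK : LipschitzWith K (gradient f)) (hαK : |α| * K < 1) {x : E} {B : E →L[ℝ] E}
    (hB : HasFDerivAt (gradient f) B (g x)) {T : E ≃L[ℝ] E}
    (hT : (T : E →L[ℝ] E) = ContinuousLinearMap.id ℝ E + α • B) :
    HasFDerivAt g (T.symm : E →L[ℝ] E) x := by
  have hΦ : HasFDerivAt (fun z => z + α • gradient f z) (T : E →L[ℝ] E) (g x) :=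
    hT ▸ (hasFDerivAt_id (g x)).add (hB.const_smul α)
  exact hΦ.of_local_left_inverse (hg.lipschitzWith hα hf hK hαK).continuous.continuousAt
    (.of_forall (hg.leftInverse hα hf))

end IsProxMap

end InnerProductSpace

theorem inv_one_add_mem_Ioc {t : ℝ} (h0 : 0 ≤ t) (h1 : t < 1) :
    (1 / 2 : ℝ) < (1 + t)⁻¹ ∧ (1 + t)⁻¹ ≤ 1 :=
  ⟨by rw [one_div]; exact inv_strictAnti₀ (by positivity) (by linarith),
    inv_le_one_of_one_le₀ (by linarith)⟩

theorem one_lt_inv_one_add {t : ℝ} (h0 : t < 0) (h1 : -1 < t) : 1 < (1 + t)⁻¹ :=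
  (one_lt_inv₀ (by linarith)).2 (by linarith)

theorem inv_one_add_sub_one {t : ℝ} (ht : 1 + t ≠ 0) : (1 + t)⁻¹ - 1 = -t / (1 + t) := by
  field_simp
  ring

theorem neg_lt_neg_div_one_add {t : ℝ} (h0 : t < 0) (h1 : -1 < t) : -t < -t / (1 + t) := by
  rw [lt_div_iff₀ (by linarith)]
  nlinarith

theorem pp_strict_saddle_instability_general {d : ℕ}
    (f : EuclideanSpace ℝ (Fin d) → ℝ) (hf : ContDiff ℝ 2 f)
    (L : ℝ) (hlip : LipschitzWith (Real.toNNReal L) (gradient f))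
    (α : ℝ) (hα0 : 0 < α) (hα1 : α < 1 / L)
    (xs : EuclideanSpace ℝ (Fin d)) (hcrit : gradient f xs = 0)
    (h : Fin d → ℝ) (v : Fin d → EuclideanSpace ℝ (Fin d))
    (hON : Orthonormal ℝ v)
    (heig : ∀ i, fderiv ℝ (gradient f) xs (v i) = h i • v i)
    (j : Fin d) (hj : h j < 0)
    (g : EuclideanSpace ℝ (Fin d) → EuclideanSpace ℝ (Fin d))
    (hargmin : ∀ x z, z ≠ g x →
      f (g x) + ‖g x - x‖ ^ 2 / (2 * α) < f z + ‖z - x‖ ^ 2 / (2 * α)) :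
    g xs = xs ∧
    (∃ A : EuclideanSpace ℝ (Fin d) →L[ℝ] EuclideanSpace ℝ (Fin d),
      HasFDerivAt g A xs ∧
      (ContinuousLinearMap.id ℝ (EuclideanSpace ℝ (Fin d))
          + α • fderiv ℝ (gradient f) xs).comp A
        = ContinuousLinearMap.id ℝ (EuclideanSpace ℝ (Fin d)) ∧
      A.comp (ContinuousLinearMap.id ℝ (EuclideanSpace ℝ (Fin d))
          + α • fderiv ℝ (gradient f) xs)
        = ContinuousLinearMap.id ℝ (EuclideanSpace ℝ (Fin d)) ∧
      (∀ i, A (v i) = (1 + α * h i)⁻¹ • v i)) ∧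
    (∀ i, 0 ≤ h i → (1/2 : ℝ) < (1 + α * h i)⁻¹ ∧ (1 + α * h i)⁻¹ ≤ 1) ∧
    (∀ i, h i < 0 → 1 < (1 + α * h i)⁻¹) ∧
    ((1 + α * h j)⁻¹ - 1 = -(α * h j) / (1 + α * h j) ∧
      -(α * h j) < -(α * h j) / (1 + α * h j) ∧ 0 < -(α * h j)) := by
  have hg : IsProxMap f α g := hargmin
  have hL : 0 < L := one_div_pos.1 (hα0.trans hα1)
  have hαL : |α| * Real.toNNReal L < 1 := by
    rwa [abs_of_pos hα0, Real.coe_toNNReal L hL.le, ← lt_div_iff₀ hL]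
  have hdf : Differentiable ℝ f := hf.differentiable two_ne_zero
  set B := fderiv ℝ (gradient f) xs
  have hB : HasFDerivAt (gradient f) B xs :=
    ((hf.gradient (n := 1)).differentiable one_ne_zero xs).hasFDerivAt
  have hαB : ‖α • B‖ < 1 := calc
    ‖α • B‖ = |α| * ‖B‖ := by rw [norm_smul, Real.norm_eq_abs]
    _ ≤ |α| * Real.toNNReal L := by gcongr; exact norm_fderiv_le_of_lipschitz ℝ hlip
    _ < 1 := hαL
  have hαh : ∀ i, -1 < α * h i ∧ α * h i < 1 := fun i => abs_lt.1 <| by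
    simpa only [Real.norm_eq_abs] using (norm_le_opNorm_of_apply_eq_smul
      (by simp [B, heig, smul_smul]) (hON.ne_zero i)).trans_lt hαB
  have hfix : g xs = xs := hg.apply_eq_self_of_gradient_eq_zero hα0.ne' hdf hlip hαL hcrit
  obtain ⟨T, hT⟩ := exists_continuousLinearEquiv_coe_eq_id_add hαB
  have hTv : ∀ i, T (v i) = (1 + α * h i) • v i := fun i => by
    simp [← ContinuousLinearEquiv.coe_coe, hT, B, heig, add_smul, smul_smul]
  refine ⟨hfix, ⟨T.symm, hg.hasFDerivAt hα0.ne' hdf hlip hαL (by rwa [hfix]) hT,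
    hT ▸ T.coe_comp_coe_symm, hT ▸ T.coe_symm_comp_coe,
    fun i => T.symm_apply_eq_inv_smul (hTv i) (by linarith [hαh i])⟩,
    fun i hi => inv_one_add_mem_Ioc (by positivity) (hαh i).2,
    fun i hi => one_lt_inv_one_add (mul_neg_of_pos_of_neg hα0 hi) (hαh i).1, ?_⟩
  have hαhj : α * h j < 0 := mul_neg_of_pos_of_neg hα0 hj
  exact ⟨inv_one_add_sub_one (by linarith [hαh j]), neg_lt_neg_div_one_add hαhj (hαh j).1,
    neg_pos.2 hαhj⟩

/-- Proximal point map at a strict saddle: if `x*` is a strict saddle of the `C²` function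
`f` with `L`-Lipschitz gradient, `α ∈ (0, 1/L)` and `g_α x = argmin_z f z + ‖z−x‖²/(2α)`,
then `g_α(x*) = x*`, `Dg_α(x*) = (I + α∇²f(x*))⁻¹` with eigenvalues `1/(1+α h_i)` on the
eigenvectors `v_i` of `∇²f(x*)`; eigenvalues with `h_i ≥ 0` lie in `(1/2, 1]`, those with
`h_i < 0` exceed `1`, and for the largest negative eigenvalue `h_j` the expansion factor
satisfies `1/(1+α h_j) − 1 = −α h_j/(1+α h_j) > −α h_j > 0`. -/
theorem pp_strict_saddle_instability {d : ℕ}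
    (f : EuclideanSpace ℝ (Fin d) → ℝ) (hf : ContDiff ℝ 2 f)
    (L : ℝ) (hL : 0 < L) (hlip : LipschitzWith (Real.toNNReal L) (gradient f))
    (α : ℝ) (hα0 : 0 < α) (hα1 : α < 1 / L)
    (xs : EuclideanSpace ℝ (Fin d)) (hcrit : gradient f xs = 0)
    (h : Fin d → ℝ) (v : Fin d → EuclideanSpace ℝ (Fin d))
    (hON : Orthonormal ℝ v)
    (heig : ∀ i, fderiv ℝ (gradient f) xs (v i) = h i • v i)
    (j : Fin d) (hj : h j < 0) (hjmax : ∀ i, h i < 0 → h i ≤ h j)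
    (g : EuclideanSpace ℝ (Fin d) → EuclideanSpace ℝ (Fin d))
    (hargmin : ∀ x z, z ≠ g x →
      f (g x) + ‖g x - x‖ ^ 2 / (2 * α) < f z + ‖z - x‖ ^ 2 / (2 * α)) :
    g xs = xs ∧
    (∃ A : EuclideanSpace ℝ (Fin d) →L[ℝ] EuclideanSpace ℝ (Fin d),
      HasFDerivAt g A xs ∧
      (ContinuousLinearMap.id ℝ (EuclideanSpace ℝ (Fin d))
          + α • fderiv ℝ (gradient f) xs).comp A
        = ContinuousLinearMap.id ℝ (EuclideanSpace ℝ (Fin d)) ∧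
      A.comp (ContinuousLinearMap.id ℝ (EuclideanSpace ℝ (Fin d))
          + α • fderiv ℝ (gradient f) xs)
        = ContinuousLinearMap.id ℝ (EuclideanSpace ℝ (Fin d)) ∧
      (∀ i, A (v i) = (1 + α * h i)⁻¹ • v i)) ∧
    (∀ i, 0 ≤ h i → (1/2 : ℝ) < (1 + α * h i)⁻¹ ∧ (1 + α * h i)⁻¹ ≤ 1) ∧
    (∀ i, h i < 0 → 1 < (1 + α * h i)⁻¹) ∧
    ((1 + α * h j)⁻¹ - 1 = -(α * h j) / (1 + α * h j) ∧
      -(α * h j) < -(α * h j) / (1 + α * h j) ∧ 0 < -(α * h j)) :=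
  pp_strict_saddle_instability_general f hf L hlip α hα0 hα1 xs hcrit h v hON heig j hj g hargmin
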